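/- arXiv:2602.08769 — 3 statements merged into one kernel-verified Lean document; each statement's English description precedes it below -/
import Mathlib

section
/- Suppose c > 1 and x, y, z, k > 0 satisfy (z/(k·x))·c^{y/x} < 1. Define d := (x²·z·c^{y/x}) / (k·x² + (x+y)·z·c^{y/x}·ln c). Then c^{-(y-d)/(x+d)}·k·d < z. -/
/-!
Write `A = c ^ (y / x)`, `L = log c` and `D = k x² + (x + y) z A L`, so that `d D = x² z A`.
Since `y / x - (y - d) / (x + d) = t := d (x + y) / (x (x + d))`, the claim reduces to
`k x² e^{L t} < D`. Now `L t D = L (x + y) z A · x / (x + d) < D - k x²`, and this suffices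
because `e^s (1 - s) ≤ 1` for every real `s`.
-/

open Real

lemma Real.exp_mul_one_sub_le (s : ℝ) : exp s * (1 - s) ≤ 1 := by
  calc exp s * (1 - s) ≤ exp s * exp (-s) :=
        mul_le_mul_of_nonneg_left (one_sub_le_exp_neg s) (exp_pos s).le
    _ = 1 := by rw [← exp_add, add_neg_cancel, exp_zero]

lemma Real.mul_exp_lt_of_add_mul_lt {a s D : ℝ} (hD : 0 ≤ D) (h : a + s * D < D) :
    a * exp s < D := by
  calc a * exp s < D * (1 - s) * exp s :=
        mul_lt_mul_of_pos_right (by linarith) (exp_pos s)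
    _ = D * (exp s * (1 - s)) := by ring
    _ ≤ D * 1 := mul_le_mul_of_nonneg_left (exp_mul_one_sub_le s) hD
    _ = D := mul_one D

lemma Real.rpow_neg_eq_exp_mul_sub_div {c : ℝ} (hc : 0 < c) (a b : ℝ) :
    c ^ (-b) = exp (log c * (a - b)) / c ^ a := by
  rw [← rpow_def_of_pos hc, rpow_sub hc, rpow_neg hc.le]
  field_simp

lemma div_sub_sub_div_add {x y d : ℝ} (hx : x ≠ 0) (hxd : x + d ≠ 0) :
    y / x - (y - d) / (x + d) = d * (x + y) / (x * (x + d)) := by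
  field_simp
  ring

theorem trans_eq_lemma_general (c x y z k d : ℝ) (hc : 1 < c) (hx : 0 < x) (hy : 0 < y)
    (hz : 0 < z) (hk : 0 < k)
    (hd : d = (x ^ 2 * z * c ^ (y / x)) /
        (k * x ^ 2 + (x + y) * z * c ^ (y / x) * Real.log c)) :
    c ^ (-((y - d) / (x + d))) * k * d < z := by
  have hc0 : 0 < c := one_pos.trans hc
  set L := log c
  set A := c ^ (y / x)
  set D := k * x ^ 2 + (x + y) * z * A * L
  have hL : 0 < L := log_pos hc
  have hA : 0 < A := rpow_pos_of_pos hc0 _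
  have hD : 0 < D := by positivity
  have hdD : d * D = x ^ 2 * z * A := by rw [hd]; field_simp
  have hd0 : 0 < d := by rw [hd]; positivity
  have hxd : 0 < x + d := by positivity
  have hpow : c ^ (-((y - d) / (x + d))) = exp (L * (d * (x + y) / (x * (x + d)))) / A := by
    rw [rpow_neg_eq_exp_mul_sub_div hc0 (y / x), div_sub_sub_div_add hx.ne' hxd.ne']
  set t := d * (x + y) / (x * (x + d))
  have htD : L * t * D < (x + y) * z * A * L :=
    calc L * t * D = (x + y) * L * (d * D) / (x * (x + d)) := by ring
      _ = (x + y) * z * A * L * (x / (x + d)) := by rw [hdD]; field_simp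
      _ < (x + y) * z * A * L :=
        mul_lt_of_lt_one_right (by positivity) ((div_lt_one hxd).2 (by linarith))
  have hkey : k * x ^ 2 * exp (L * t) < D := mul_exp_lt_of_add_mul_lt hD.le (by linarith)
  calc c ^ (-((y - d) / (x + d))) * k * d
      = z / D * (k * x ^ 2 * exp (L * t)) := by
        rw [hpow, eq_div_iff hD.ne' |>.2 hdD]; field_simp
    _ < z / D * D := mul_lt_mul_of_pos_left hkey (by positivity)
    _ = z := div_mul_cancel₀ z hD.ne'

theorem trans_eq_lemma (c x y z k d : ℝ) (hc : 1 < c) (hx : 0 < x) (hy : 0 < y)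
    (hz : 0 < z) (hk : 0 < k)
    (hsmall : (z / (k * x)) * c ^ (y / x) < 1)
    (hd : d = (x ^ 2 * z * c ^ (y / x)) /
        (k * x ^ 2 + (x + y) * z * c ^ (y / x) * Real.log c)) :
    c ^ (-((y - d) / (x + d))) * k * d < z :=
  trans_eq_lemma_general c x y z k d hc hx hy hz hk hd
end

section
/- With ν and (p_s) as above, for all t > 0, -t²·(d/dt)∫₀^∞ e^{-xt}·ν(x) dx = Σ_s (1 - e^{-p_s t} - t·p_s·e^{-p_s t}). -/
/-!
For `u > 0` the transform is computed term by term: `∫₀^∞ e^{-xu} 1_{x < p} dx = (1 - e^{-pu}) / u`,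
and the interchange of `∫` and `∑'` is justified because these nonnegative terms are summable
(`1 - e^{-pu} ≤ pu`). Near `t` the transform is therefore `G(u) / u` with
`G(u) = ∑' s, (1 - e^{-p_s u})`, which may be differentiated termwise since the derivatives
`p_s e^{-p_s u}` are bounded by the summable `p_s` on `u > 0`. Finally
`-t² (G / u)'(t) = G(t) - t G'(t)`.
-/

open MeasureTheory Real Set Filter Topology

lemma exp_neg_mul_mul_ite_lt_eq_indicator (q u x : ℝ) :
    exp (-x * u) * (if x < q then (1 : ℝ) else 0) = (Iio q).indicator (fun x => exp (-x * u)) x := by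
  by_cases h : x < q <;> simp [h]

lemma integral_exp_neg_mul {q u : ℝ} (hu : u ≠ 0) :
    ∫ x in (0 : ℝ)..q, exp (-x * u) = (1 - exp (-q * u)) / u := by
  simp only [neg_mul_comm]
  rw [intervalIntegral.integral_comp_mul_right exp (neg_ne_zero.mpr hu), integral_exp,
    smul_eq_mul, zero_mul, exp_zero, inv_neg]
  field_simp
  ring

lemma integrableOn_Ioi_exp_neg_mul_ite_lt (q u : ℝ) :
    IntegrableOn (fun x => exp (-x * u) * (if x < q then (1 : ℝ) else 0)) (Ioi 0) := by
  simp_rw [exp_neg_mul_mul_ite_lt_eq_indicator q u]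
  rw [integrableOn_indicator_iff measurableSet_Iio]
  exact (by fun_prop : Continuous fun x : ℝ => exp (-x * u)).integrableOn_Icc.mono_set
    fun x hx => ⟨hx.2.le, hx.1.le⟩

lemma integral_Ioi_exp_neg_mul_ite_lt {q u : ℝ} (hq : 0 ≤ q) (hu : u ≠ 0) :
    ∫ x in Ioi 0, exp (-x * u) * (if x < q then (1 : ℝ) else 0) = (1 - exp (-q * u)) / u := by
  simp_rw [exp_neg_mul_mul_ite_lt_eq_indicator q u]
  rw [setIntegral_indicator measurableSet_Iio, Ioi_inter_Iio, ← integral_Ioc_eq_integral_Ioo,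
    ← intervalIntegral.integral_of_le hq, integral_exp_neg_mul hu]

section Series

variable {ι : Type*} {p : ι → ℝ}

lemma summable_one_sub_exp_neg_mul (hp : ∀ s, 0 ≤ p s) (hsum : Summable p) {u : ℝ}
    (hu : 0 ≤ u) : Summable fun s => 1 - exp (-p s * u) :=
  (hsum.mul_right u).of_nonneg_of_le
    (fun s => sub_nonneg.mpr (exp_le_one_iff.mpr (by nlinarith [hp s])))
    (fun s => by rw [neg_mul]; linarith [one_sub_le_exp_neg (p s * u)])

lemma norm_mul_exp_neg_mul_le (hp : ∀ s, 0 ≤ p s) {u : ℝ} (hu : 0 ≤ u) (s : ι) :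
    ‖p s * exp (-p s * u)‖ ≤ p s := by
  rw [norm_of_nonneg (by positivity [hp s])]
  exact mul_le_of_le_one_right (hp s) (exp_le_one_iff.mpr (by nlinarith [hp s]))

lemma hasDerivAt_tsum_one_sub_exp_neg_mul (hp : ∀ s, 0 ≤ p s) (hsum : Summable p) {t : ℝ}
    (ht : 0 < t) :
    HasDerivAt (fun u => ∑' s, (1 - exp (-p s * u))) (∑' s, p s * exp (-p s * t)) t := by
  have hderiv (s : ι) (u : ℝ) :
      HasDerivAt (fun u => 1 - exp (-p s * u)) (p s * exp (-p s * u)) u :=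
    (((hasDerivAt_id' u).const_mul (-p s)).exp.const_sub 1).congr_deriv (by ring)
  exact hasDerivAt_tsum_of_isPreconnected hsum isOpen_Ioi isPreconnected_Ioi
    (fun s u _ => hderiv s u) (fun s u hu => norm_mul_exp_neg_mul_le hp hu.le s) ht
    (summable_one_sub_exp_neg_mul hp hsum ht.le) ht

theorem integral_Ioi_exp_neg_mul_tsum_ite_lt [Countable ι] (hp : ∀ s, 0 ≤ p s)
    (hsum : Summable p) {u : ℝ} (hu : 0 < u) :
    ∫ x in Ioi 0, exp (-x * u) * (∑' s, if x < p s then (1 : ℝ) else 0) =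
      ∑' s, (1 - exp (-p s * u)) / u := by
  simp_rw [← tsum_mul_left]
  have hint (s : ι) := integral_Ioi_exp_neg_mul_ite_lt (hp s) hu.ne'
  rw [← integral_tsum_of_summable_integral_norm
    (fun s => integrableOn_Ioi_exp_neg_mul_ite_lt _ _)]
  · exact tsum_congr hint
  · have hnorm (s : ι) (x : ℝ) : ‖exp (-x * u) * (if x < p s then (1 : ℝ) else 0)‖ =
        exp (-x * u) * (if x < p s then (1 : ℝ) else 0) :=
      norm_of_nonneg (by positivity)
    simp_rw [hnorm, hint]
    exact (summable_one_sub_exp_neg_mul hp hsum hu.le).div_const u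

end Series

theorem laplace_nu_deriv {ι : Type*} [Countable ι] (p : ι → ℝ)
    (hp : ∀ s, 0 ≤ p s) (hsum : Summable p) (t : ℝ) (ht : 0 < t) :
    -t ^ 2 * deriv (fun u : ℝ => ∫ x in Set.Ioi (0 : ℝ),
        Real.exp (-x * u) * (∑' s : ι, if x < p s then (1 : ℝ) else 0)) t =
      ∑' s : ι, (1 - Real.exp (-(p s) * t) - t * p s * Real.exp (-(p s) * t)) := by
  have hlaplace : (fun u : ℝ => ∫ x in Ioi 0,
      exp (-x * u) * (∑' s, if x < p s then (1 : ℝ) else 0))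
      =ᶠ[𝓝 t] fun u => (∑' s, (1 - exp (-p s * u))) / u := by
    filter_upwards [Ioi_mem_nhds ht] with u hu
    rw [integral_Ioi_exp_neg_mul_tsum_ite_lt hp hsum hu, tsum_div_const]
  rw [hlaplace.deriv_eq,
    ((hasDerivAt_tsum_one_sub_exp_neg_mul hp hsum ht).fun_div (hasDerivAt_id' t) ht.ne').deriv]
  simp_rw [mul_assoc t (p _)]
  rw [(summable_one_sub_exp_neg_mul hp hsum ht.le).tsum_sub
      ((hsum.of_norm_bounded (norm_mul_exp_neg_mul_le hp ht.le)).mul_left t), tsum_mul_left]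
  field_simp
  ring
end

section
/- Let X be a nonnegative-integer-valued random variable admitting a size-biased coupling X^{[b]} with X^{[b]} - X ≤ B almost surely for a constant B > 0 and X^{[b]} ≥ X. Then for all z ≥ 0, P(X - E[X] ≤ -z) ≤ exp(-z²/(2B·E[X])). -/
/-!
With `φ s = E[exp (-s X)]`, the size-bias identity gives
`-φ' s = E[X exp (-s X)] = E[X] E[exp (-s X^b)] ≥ E[X] exp (-s B) φ s`, since `X^b ≤ X + B`.
Integrating, `φ θ ≤ exp (-E[X] (θ - B θ² / 2))`, and Chernoff's bound at `θ = z / (B E[X])`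
gives the tail estimate. The differential inequality is used in the discrete form
`φ (s + h) (1 + h E[X] exp (-(s + h) B)) ≤ φ s`, iterated along a mesh of width `θ / n` with
`n → ∞`, which avoids differentiating under the integral sign.
-/

open MeasureTheory ProbabilityTheory Real Filter

lemma Real.inv_one_add_le_exp_neg_add_sq {x : ℝ} (hx : 0 ≤ x) : (1 + x)⁻¹ ≤ exp (-x + x ^ 2) := by
  have hlog : x - x ^ 2 ≤ log (1 + x) := by
    refine le_trans ?_ (le_log_one_add_of_nonneg hx)
    rw [le_div_iff₀ (by linarith)]
    nlinarith [pow_nonneg hx 3]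
  rw [show -x + x ^ 2 = -(x - x ^ 2) by ring, exp_neg]
  refine inv_anti₀ (exp_pos _) ?_
  calc exp (x - x ^ 2) ≤ exp (log (1 + x)) := exp_le_exp.2 hlog
    _ = 1 + x := exp_log (by linarith)

lemma le_mul_exp_of_step_le {φ : ℝ → ℝ} {a b K : ℝ}
    (hstep : ∀ s h, 0 ≤ s → 0 ≤ h →
      φ (s + h) ≤ φ s * exp (-(a * h) + b * (s + h) * h + K * h ^ 2))
    {θ : ℝ} (hθ : 0 ≤ θ) : φ θ ≤ φ 0 * exp (-(a * θ) + b * θ ^ 2 / 2) := by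
  -- the last term is the discretisation error: `O(θ² / k)` on the mesh `h = θ / k`
  have iterate : ∀ {h : ℝ}, 0 ≤ h → ∀ k : ℕ,
      φ (k * h) ≤ φ 0 * exp (-(a * (k * h)) + b * (k * h) ^ 2 / 2 + (b / 2 + K) * (k * h ^ 2)) := by
    intro h hh k
    induction k with
    | zero => simp
    | succ k ih =>
      calc φ ((k + 1 : ℕ) * h) = φ (k * h + h) := by push_cast; ring_nf
        _ ≤ φ (k * h) * exp (-(a * h) + b * (k * h + h) * h + K * h ^ 2) :=
          hstep _ _ (by positivity) hh
        _ ≤ φ 0 * exp (-(a * (k * h)) + b * (k * h) ^ 2 / 2 + (b / 2 + K) * (k * h ^ 2))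
            * exp (-(a * h) + b * (k * h + h) * h + K * h ^ 2) :=
          mul_le_mul_of_nonneg_right ih (exp_nonneg _)
        _ = _ := by rw [mul_assoc, ← exp_add]; push_cast; ring_nf
  have hbound : ∀ n : ℕ, 0 < n →
      φ θ ≤ φ 0 * exp (-(a * θ) + b * θ ^ 2 / 2 + (b / 2 + K) * (θ ^ 2 / n)) := by
    intro n hn
    have hn' : (n : ℝ) ≠ 0 := by positivity
    have := iterate (h := θ / n) (by positivity) n
    rwa [mul_div_cancel₀ _ hn', show (n : ℝ) * (θ / n) ^ 2 = θ ^ 2 / n by field_simp] at this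
  refine ge_of_tendsto ?_ (eventually_gt_atTop 0 |>.mono hbound)
  have hlim := ((tendsto_const_div_atTop_nhds_zero_nat (θ ^ 2)).const_mul (b / 2 + K)).const_add
    (-(a * θ) + b * θ ^ 2 / 2)
  rw [mul_zero, add_zero] at hlim
  exact ((continuous_exp.tendsto _).comp hlim).const_mul _

section SizeBias

variable {Ω : Type*} [MeasurableSpace Ω] {μ : Measure Ω}

def IsSizeBiased (μ : Measure Ω) (X Xb : Ω → ℕ) : Prop :=
  ∀ f : ℕ → ℝ, (∃ C : ℝ, ∀ n, |f n| ≤ C) →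
    ∫ ω, f (Xb ω) ∂μ = (∫ ω, (X ω : ℝ) * f (X ω) ∂μ) / ∫ ω, (X ω : ℝ) ∂μ

lemma integrable_exp_neg_mul_of_nonneg [IsFiniteMeasure μ] {X : Ω → ℝ} (hX : AEMeasurable X μ)
    (hX0 : 0 ≤ᵐ[μ] X) {t : ℝ} (ht : 0 ≤ t) : Integrable (fun ω ↦ exp (-t * X ω)) μ := by
  refine .of_bound (by fun_prop) 1 ?_
  filter_upwards [hX0] with ω hω
  rw [norm_of_nonneg (exp_nonneg _), exp_le_one_iff, neg_mul, neg_nonpos]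
  exact mul_nonneg ht hω

lemma mgf_neg_add_add_mul_integral_le [IsFiniteMeasure μ] {X : Ω → ℝ} (hX : Integrable X μ)
    (hX0 : 0 ≤ᵐ[μ] X) {s h : ℝ} (hs : 0 ≤ s) (hh : 0 ≤ h) :
    mgf X μ (-(s + h)) + h * ∫ ω, X ω * exp (-(s + h) * X ω) ∂μ ≤ mgf X μ (-s) := by
  have hint := integrable_exp_neg_mul_of_nonneg hX.aemeasurable hX0 (add_nonneg hs hh)
  have hint' : Integrable (fun ω ↦ X ω * exp (-(s + h) * X ω)) μ := by
    refine hX.mul_bdd hint.aestronglyMeasurable (c := 1) ?_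
    filter_upwards [hX0] with ω (hω : 0 ≤ X ω)
    rw [norm_of_nonneg (exp_nonneg _), exp_le_one_iff, neg_mul, neg_nonpos]
    positivity
  rw [mgf, mgf, ← integral_const_mul, ← integral_add hint (hint'.const_mul h)]
  refine integral_mono (hint.add (hint'.const_mul h))
    (integrable_exp_neg_mul_of_nonneg hX.aemeasurable hX0 hs) fun ω ↦ ?_
  have key : exp (-(h * X ω)) * (1 + h * X ω) ≤ 1 := by
    calc exp (-(h * X ω)) * (1 + h * X ω) ≤ exp (-(h * X ω)) * exp (h * X ω) := by
          gcongr; linarith [add_one_le_exp (h * X ω)]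
      _ = 1 := by rw [← exp_add, neg_add_cancel, exp_zero]
  have hsplit : exp (-(s + h) * X ω) = exp (-s * X ω) * exp (-(h * X ω)) := by
    rw [← exp_add]; ring_nf
  calc exp (-(s + h) * X ω) + h * (X ω * exp (-(s + h) * X ω))
      = exp (-s * X ω) * (exp (-(h * X ω)) * (1 + h * X ω)) := by rw [hsplit]; ring
    _ ≤ exp (-s * X ω) := mul_le_of_le_one_right (exp_nonneg _) key

variable {X Xb : Ω → ℕ} {B : ℝ}

lemma mul_exp_neg_mul_mgf_le_integral [IsFiniteMeasure μ]
    (hXint : Integrable (fun ω ↦ (X ω : ℝ)) μ) (hXb : Measurable Xb)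
    (hsize : IsSizeBiased μ X Xb) (hmean : 0 < ∫ ω, (X ω : ℝ) ∂μ)
    (hbound : ∀ᵐ ω ∂μ, (Xb ω : ℝ) - X ω ≤ B) {t : ℝ} (ht : 0 ≤ t) :
    (∫ ω, (X ω : ℝ) ∂μ) * (exp (-t * B) * mgf (fun ω ↦ (X ω : ℝ)) μ (-t)) ≤
      ∫ ω, (X ω : ℝ) * exp (-t * X ω) ∂μ := by
  have hXb' : Measurable fun ω ↦ (Xb ω : ℝ) := by fun_prop
  have hbiased : ∫ ω, (X ω : ℝ) * exp (-t * X ω) ∂μ =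
      (∫ ω, (X ω : ℝ) ∂μ) * ∫ ω, exp (-t * Xb ω) ∂μ := by
    rw [hsize (fun n ↦ exp (-t * n)) ⟨1, fun n ↦ ?_⟩, mul_div_cancel₀ _ hmean.ne']
    rw [abs_of_nonneg (exp_nonneg _), exp_le_one_iff, neg_mul, neg_nonpos]
    positivity
  rw [hbiased, mgf, ← integral_const_mul]
  refine mul_le_mul_of_nonneg_left (integral_mono_ae ?_ ?_ ?_) hmean.le
  · exact (integrable_exp_neg_mul_of_nonneg hXint.aemeasurable
      (ae_of_all _ fun _ ↦ by positivity) ht).const_mul _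
  · exact integrable_exp_neg_mul_of_nonneg hXb'.aemeasurable (ae_of_all _ fun _ ↦ by positivity) ht
  · filter_upwards [hbound] with ω hω
    rw [← exp_add]
    exact exp_le_exp.2 (by nlinarith)

lemma mgf_neg_le_exp [IsProbabilityMeasure μ] (hXint : Integrable (fun ω ↦ (X ω : ℝ)) μ)
    (hXb : Measurable Xb) (hsize : IsSizeBiased μ X Xb) (hmean : 0 < ∫ ω, (X ω : ℝ) ∂μ)
    (hB : 0 ≤ B) (hbound : ∀ᵐ ω ∂μ, (Xb ω : ℝ) - X ω ≤ B) {θ : ℝ} (hθ : 0 ≤ θ) :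
    mgf (fun ω ↦ (X ω : ℝ)) μ (-θ) ≤
      exp (-((∫ ω, (X ω : ℝ) ∂μ) * θ) + (∫ ω, (X ω : ℝ) ∂μ) * B * θ ^ 2 / 2) := by
  set m := ∫ ω, (X ω : ℝ) ∂μ
  set φ : ℝ → ℝ := fun s ↦ mgf (fun ω ↦ (X ω : ℝ)) μ (-s)
  have hX0 : 0 ≤ᵐ[μ] fun ω ↦ (X ω : ℝ) := ae_of_all _ fun _ ↦ Nat.cast_nonneg _
  suffices hstep : ∀ s h, 0 ≤ s → 0 ≤ h →
      φ (s + h) ≤ φ s * exp (-(m * h) + m * B * (s + h) * h + m ^ 2 * h ^ 2) by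
    simpa [φ] using le_mul_exp_of_step_le hstep hθ
  intro s h hs hh
  set x := h * m * exp (-(s + h) * B)
  have hx0 : 0 ≤ x := by positivity
  have hx_le : x ≤ h * m :=
    mul_le_of_le_one_right (by positivity) (exp_le_one_iff.2 (by nlinarith))
  have hx_ge : h * m * (1 - (s + h) * B) ≤ x :=
    mul_le_mul_of_nonneg_left (by linarith [add_one_le_exp (-(s + h) * B)]) (by positivity)
  have hmul : φ (s + h) * (1 + x) ≤ φ s :=
    calc φ (s + h) * (1 + x) = φ (s + h) + h * (m * (exp (-(s + h) * B) * φ (s + h))) := by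
          ring
      _ ≤ φ (s + h) + h * ∫ ω, (X ω : ℝ) * exp (-(s + h) * X ω) ∂μ := by
          gcongr
          exact mul_exp_neg_mul_mgf_le_integral hXint hXb hsize hmean hbound (by positivity)
      _ ≤ φ s := mgf_neg_add_add_mul_integral_le hXint hX0 hs hh
  calc φ (s + h) ≤ φ s * (1 + x)⁻¹ := by
        rw [← div_eq_mul_inv, le_div_iff₀ (by positivity)]; exact hmul
    _ ≤ φ s * exp (-x + x ^ 2) :=
        mul_le_mul_of_nonneg_left (inv_one_add_le_exp_neg_add_sq hx0) mgf_nonneg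
    _ ≤ φ s * exp (-(m * h) + m * B * (s + h) * h + m ^ 2 * h ^ 2) :=
        mul_le_mul_of_nonneg_left (exp_le_exp.2 (by nlinarith)) mgf_nonneg

end SizeBias

theorem size_biased_lower_tail_general {Ω : Type*} [MeasurableSpace Ω]
    (μ : Measure Ω) [IsProbabilityMeasure μ]
    (X Xb : Ω → ℕ) (hXb : Measurable Xb)
    (hXint : Integrable (fun ω => (X ω : ℝ)) μ)
    (hmean : 0 < ∫ ω, (X ω : ℝ) ∂μ)
    (B : ℝ) (hB : 0 < B)
    (hcoupling : ∀ᵐ ω ∂μ, (X ω : ℝ) ≤ Xb ω ∧ (Xb ω : ℝ) - X ω ≤ B)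
    (hsize : ∀ f : ℕ → ℝ, (∃ C : ℝ, ∀ n, |f n| ≤ C) →
      ∫ ω, f (Xb ω) ∂μ = (∫ ω, (X ω : ℝ) * f (X ω) ∂μ) / ∫ ω, (X ω : ℝ) ∂μ) :
    ∀ z : ℝ, 0 ≤ z →
      (μ {ω | (X ω : ℝ) - ∫ ω', (X ω' : ℝ) ∂μ ≤ -z}).toReal ≤
        Real.exp (-z ^ 2 / (2 * B * ∫ ω, (X ω : ℝ) ∂μ)) := by
  intro z hz
  set m := ∫ ω, (X ω : ℝ) ∂μ
  -- the Chernoff parameter minimising `-θ z + m B θ² / 2`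
  set θ := z / (m * B)
  have hθ : 0 ≤ θ := by positivity
  have hint := integrable_exp_neg_mul_of_nonneg hXint.aemeasurable
    (ae_of_all _ fun ω ↦ Nat.cast_nonneg (X ω)) hθ
  calc (μ {ω | (X ω : ℝ) - m ≤ -z}).toReal = μ.real {ω | (X ω : ℝ) ≤ m - z} := by
        simp only [sub_le_iff_le_add, neg_add_eq_sub, measureReal_def]
    _ ≤ exp (-(-θ) * (m - z)) * mgf (fun ω ↦ (X ω : ℝ)) μ (-θ) :=
        measure_le_le_exp_mul_mgf _ (neg_nonpos.2 hθ) hint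
    _ ≤ exp (-(-θ) * (m - z)) * exp (-(m * θ) + m * B * θ ^ 2 / 2) := by
        gcongr
        exact mgf_neg_le_exp hXint hXb hsize hmean hB.le (hcoupling.mono fun _ h ↦ h.2) hθ
    _ = exp (-z ^ 2 / (2 * B * m)) := by
        rw [← exp_add]; congr 1; simp only [θ]; field_simp; ring

theorem size_biased_lower_tail {Ω : Type*} [MeasurableSpace Ω]
    (μ : Measure Ω) [IsProbabilityMeasure μ]
    (X Xb : Ω → ℕ) (hX : Measurable X) (hXb : Measurable Xb)
    (hXint : Integrable (fun ω => (X ω : ℝ)) μ)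
    (hmean : 0 < ∫ ω, (X ω : ℝ) ∂μ)
    (B : ℝ) (hB : 0 < B)
    (hcoupling : ∀ᵐ ω ∂μ, (X ω : ℝ) ≤ Xb ω ∧ (Xb ω : ℝ) - X ω ≤ B)
    (hsize : ∀ f : ℕ → ℝ, (∃ C : ℝ, ∀ n, |f n| ≤ C) →
      ∫ ω, f (Xb ω) ∂μ = (∫ ω, (X ω : ℝ) * f (X ω) ∂μ) / ∫ ω, (X ω : ℝ) ∂μ) :
    ∀ z : ℝ, 0 ≤ z →
      (μ {ω | (X ω : ℝ) - ∫ ω', (X ω' : ℝ) ∂μ ≤ -z}).toReal ≤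
        Real.exp (-z ^ 2 / (2 * B * ∫ ω, (X ω : ℝ) ∂μ)) :=
  size_biased_lower_tail_general μ X Xb hXb hXint hmean B hB hcoupling hsize
end
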